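/- Polyharmonic logarithmic Sobolev inequality with explicit constant, conditional on the classical logarithmic Sobolev inequality. Let N ≥ 1 and m ≥ 1 be integers and let u : ℝ^N → ℝ be a Schwartz function with ∫_{ℝ^N} u(x)² dx = 1. Suppose that u satisfies the classical logarithmic Sobolev inequality ∫_{ℝ^N} u(x)² log|u(x)| dx ≤ (N/4) · log( (2/(πeN)) · S₁(u) ), where the integrand |u|² log|u| is understood to vanish where u = 0. Then ∫_{ℝ^N} u(x)² log|u(x)| dx ≤ (N/(4m)) · log( (2/(πeN))^m · S_m(u) ). -/

import Mathlib

open MeasureTheory Real FourierTransform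
open scoped ENNReal

noncomputable section

/-- Partial derivative in the `i`-th coordinate direction. -/
def pd {N : ℕ} (i : Fin N) (u : EuclideanSpace ℝ (Fin N) → ℝ) :
    EuclideanSpace ℝ (Fin N) → ℝ :=
  fun x => fderiv ℝ u x (EuclideanSpace.single i 1)

/-- Iterated partial derivative along a list of coordinate directions. -/
def pdIter {N : ℕ} (l : List (Fin N)) (u : EuclideanSpace ℝ (Fin N) → ℝ) :
    EuclideanSpace ℝ (Fin N) → ℝ :=
  l.foldr pd u

/-- The Laplacian on `ℝ^N`. -/
def lap {N : ℕ} (u : EuclideanSpace ℝ (Fin N) → ℝ) : EuclideanSpace ℝ (Fin N) → ℝ :=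
  fun x => ∑ i, pd i (pd i u) x

/-- The `k`-fold iterated Laplacian `Δ^k`. -/
def iterLap {N : ℕ} (k : ℕ) (u : EuclideanSpace ℝ (Fin N) → ℝ) :
    EuclideanSpace ℝ (Fin N) → ℝ :=
  lap^[k] u

/-- The `j`-th Dirichlet energy: the sum, over all tuples `(i₁,…,i_j) ∈ {1,…,N}^j`,
of the squared `L²` norms of the iterated partial derivatives of order `j`. -/
def dirEnergy {N : ℕ} (j : ℕ) (u : EuclideanSpace ℝ (Fin N) → ℝ) : ℝ :=
  ∑ p : Fin j → Fin N, ∫ x : EuclideanSpace ℝ (Fin N), (pdIter (List.ofFn p) u x) ^ 2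

/-!
Let `S_j` be the `j`-th energy of `u`, and write the derivatives of order `j + 1` and `j + 2`
as `∂ᵢ w` and `∂ᵢ∂ₖ w` with `w` running over the derivatives of order `j`. Integration by parts
gives `∑ᵢ ‖∂ᵢ w‖² = -⟪w, Δw⟫` and, twice more with `∂ᵢ∂ₖ = ∂ₖ∂ᵢ`, `‖Δw‖² = ∑ᵢₖ ‖∂ᵢ∂ₖ w‖²`;
Cauchy–Schwarz in `L²` and then for finite sums yields the log-convexity `S_{j+1}² ≤ S_j S_{j+2}`. Since `S_0 = ‖u‖² = 1`, the ratios
`S_{j+1} / S_j` increase, so `S_1 ^ m ≤ S_m`, and the classical inequality for `S_1` becomes the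
polyharmonic one because `log` is monotone.
-/

open LineDeriv
open scoped SchwartzMap

section LogConvex

variable {a : ℕ → ℝ}

theorem pos_of_sq_le_mul (h0 : 0 < a 0) (h1 : 0 < a 1)
    (hconv : ∀ j, a (j + 1) ^ 2 ≤ a j * a (j + 2)) (j : ℕ) : 0 < a j := by
  induction j using Nat.twoStepInduction with
  | zero => exact h0
  | one => exact h1
  | more j hj hj1 =>
    exact pos_of_mul_pos_right ((pow_pos hj1 2).trans_le (hconv j)) hj.le

theorem mul_le_mul_succ_of_sq_le_mul (h0 : 0 < a 0) (h1 : 0 < a 1)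
    (hconv : ∀ j, a (j + 1) ^ 2 ≤ a j * a (j + 2)) (j : ℕ) :
    a 1 * a j ≤ a 0 * a (j + 1) := by
  induction j with
  | zero => rw [mul_comm]
  | succ j ih =>
    have hj := pos_of_sq_le_mul h0 h1 hconv j
    refine le_of_mul_le_mul_left ?_ hj
    calc a j * (a 1 * a (j + 1)) = (a 1 * a j) * a (j + 1) := by ring
      _ ≤ (a 0 * a (j + 1)) * a (j + 1) := by
        gcongr; exact (pos_of_sq_le_mul h0 h1 hconv (j + 1)).le
      _ = a 0 * a (j + 1) ^ 2 := by ring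
      _ ≤ a 0 * (a j * a (j + 2)) := by gcongr; exact hconv j
      _ = a j * (a 0 * a (j + 2)) := by ring

theorem pow_mul_le_pow_mul_of_sq_le_mul (h0 : 0 < a 0) (h1 : 0 < a 1)
    (hconv : ∀ j, a (j + 1) ^ 2 ≤ a j * a (j + 2)) (m : ℕ) :
    a 1 ^ m * a 0 ≤ a 0 ^ m * a m := by
  induction m with
  | zero => simp
  | succ m ih =>
    calc a 1 ^ (m + 1) * a 0 = a 1 * (a 1 ^ m * a 0) := by ring
      _ ≤ a 1 * (a 0 ^ m * a m) := by gcongr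
      _ = a 0 ^ m * (a 1 * a m) := by ring
      _ ≤ a 0 ^ m * (a 0 * a (m + 1)) :=
        mul_le_mul_of_nonneg_left (mul_le_mul_succ_of_sq_le_mul h0 h1 hconv m)
          (pow_nonneg h0.le m)
      _ = a 0 ^ (m + 1) * a (m + 1) := by ring

end LogConvex

theorem sq_integral_mul_le {α : Type*} [MeasurableSpace α] {μ : Measure α} {f g : α → ℝ}
    (hf : MemLp f 2 μ) (hg : MemLp g 2 μ) :
    (∫ x, f x * g x ∂μ) ^ 2 ≤ (∫ x, f x ^ 2 ∂μ) * ∫ x, g x ^ 2 ∂μ := by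
  have integral_eq_inner {φ ψ : α → ℝ} (hφ : MemLp φ 2 μ) (hψ : MemLp ψ 2 μ) :
      ∫ x, φ x * ψ x ∂μ = inner ℝ hφ.toLp hψ.toLp := by
    rw [L2.inner_def]
    refine integral_congr_ae ?_
    filter_upwards [hφ.coeFn_toLp, hψ.coeFn_toLp] with x hφx hψx
    simp [hφx, hψx, mul_comm]
  simp only [sq, integral_eq_inner hf hg, integral_eq_inner hf hf, integral_eq_inner hg hg]
  exact real_inner_mul_inner_self_le _ _

theorem Fin.sum_univ_fun_succ {ι M : Type*} [Fintype ι] [AddCommMonoid M] {n : ℕ}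
    (F : (Fin (n + 1) → ι) → M) : ∑ p, F p = ∑ i, ∑ q : Fin n → ι, F (Fin.cons i q) := by
  rw [← (Fin.consEquiv fun _ => ι).sum_comp, Fintype.sum_prod_type]
  rfl

namespace SchwartzMap

variable {E F : Type*} [NormedAddCommGroup E] [NormedSpace ℝ E]
  [NormedAddCommGroup F] [NormedSpace ℝ F]

theorem lineDerivOp_comm (f : 𝓢(E, F)) (v w : E) : ∂_{v} (∂_{w} f) = ∂_{w} (∂_{v} f) := by
  ext x
  have hdf : Differentiable ℝ (fderiv ℝ f) :=
    (contDiff_infty_iff_fderiv.mp (f.smooth ⊤)).2.differentiable (by simp)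
  have hsymm : IsSymmSndFDerivAt ℝ f x :=
    (f.smooth ⊤).contDiffAt.isSymmSndFDerivAt
      (by rw [minSmoothness_of_isRCLikeNormedField]; exact WithTop.coe_le_coe.mpr le_top)
  have second (v w : E) : ∂_{v} (∂_{w} f) x = fderiv ℝ (fderiv ℝ f) x v w := by
    change fderiv ℝ (fun y => fderiv ℝ f y w) x v = _
    rw [fderiv_clm_apply (hdf x) (differentiableAt_const w)]
    simp
  rw [second, second, hsymm]

theorem eq_zero_of_lineDerivOp_eq_zero [FiniteDimensional ℝ E] [Nontrivial E] {ι : Type*}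
    (b : Module.Basis ι ℝ E) {f : 𝓢(E, F)} (h : ∀ i, ∂_{b i} f = 0) : f = 0 := by
  have hfderiv (x : E) : fderiv ℝ f x = 0 :=
    ContinuousLinearMap.coe_injective <| b.ext fun i => by
      simpa [lineDerivOp_apply_eq_fderiv] using congrArg (· x) (h i)
  have hconst (x : E) : f x = f 0 := is_const_of_fderiv_eq_zero f.differentiable hfderiv x 0
  have hlim : Filter.Tendsto (fun _ : E => f 0) (Filter.cocompact E) (nhds 0) := by
    simpa only [← funext hconst] using f.tendsto_cocompact
  ext x
  rw [hconst, tendsto_const_nhds_iff.mp hlim]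
  rfl

section Integration

variable [FiniteDimensional ℝ E] [MeasurableSpace E] [BorelSpace E]
  {μ : Measure E} [μ.IsAddHaarMeasure]

theorem integrable_mul (f g : 𝓢(E, ℝ)) : Integrable (fun x => f x * g x) μ :=
  (f.memLp 2 μ).integrable_mul (g.memLp 2 μ)

theorem integral_sq_pos {g : 𝓢(E, ℝ)} (hg : g ≠ 0) : 0 < ∫ x, g x ^ 2 ∂μ := by
  rw [integral_pos_iff_support_of_nonneg (fun x => sq_nonneg _) (g.memLp 2 μ).integrable_sq]
  obtain ⟨x, hx⟩ : ∃ x, g x ≠ 0 := by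
    by_contra! h
    exact hg (ext h)
  exact (isOpen_ne_fun (g.continuous.pow 2) continuous_const).measure_pos μ ⟨x, by simpa using hx⟩

variable {ι : Type*} [Fintype ι] (v : ι → E)

theorem sum_integral_lineDerivOp_sq (f : 𝓢(E, ℝ)) :
    ∑ i, ∫ x, ∂_{v i} f x ^ 2 ∂μ = -∫ x, f x * (∑ i, ∂_{v i} (∂_{v i} f)) x ∂μ := by
  simp only [sum_apply, Finset.mul_sum]
  rw [integral_finsetSum _ fun i _ => integrable_mul _ _, ← Finset.sum_neg_distrib]
  refine Finset.sum_congr rfl fun i _ => ?_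
  rw [integral_mul_lineDerivOp_right_eq_neg_left, neg_neg]
  simp only [sq]

omit [Fintype ι] in
theorem integral_lineDerivOp_lineDerivOp_mul (f : 𝓢(E, ℝ)) (v w : E) :
    ∫ x, ∂_{v} (∂_{v} f) x * ∂_{w} (∂_{w} f) x ∂μ = ∫ x, ∂_{v} (∂_{w} f) x ^ 2 ∂μ := by
  have hcomm : ∂_{w} (∂_{v} (∂_{v} f)) = ∂_{v} (∂_{v} (∂_{w} f)) := by
    rw [lineDerivOp_comm (∂_{v} f), lineDerivOp_comm f]
  rw [integral_mul_lineDerivOp_right_eq_neg_left, hcomm,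
    ← integral_mul_lineDerivOp_right_eq_neg_left (∂_{v} (∂_{w} f)) (∂_{w} f) v]
  simp only [sq]

theorem integral_sum_lineDerivOp_lineDerivOp_sq (f : 𝓢(E, ℝ)) :
    ∫ x, (∑ i, ∂_{v i} (∂_{v i} f)) x ^ 2 ∂μ = ∑ i, ∑ k, ∫ x, ∂_{v i} (∂_{v k} f) x ^ 2 ∂μ := by
  simp only [sum_apply, sq, Finset.sum_mul_sum]
  rw [integral_finsetSum _ fun i _ => integrable_finsetSum _ fun k _ => integrable_mul _ _]
  refine Finset.sum_congr rfl fun i _ => ?_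
  rw [integral_finsetSum _ fun k _ => integrable_mul _ _]
  simp only [integral_lineDerivOp_lineDerivOp_mul, sq]

theorem sq_sum_integral_lineDerivOp_sq_le (f : 𝓢(E, ℝ)) :
    (∑ i, ∫ x, ∂_{v i} f x ^ 2 ∂μ) ^ 2
      ≤ (∫ x, f x ^ 2 ∂μ) * ∑ i, ∑ k, ∫ x, ∂_{v i} (∂_{v k} f) x ^ 2 ∂μ := by
  rw [sum_integral_lineDerivOp_sq, neg_sq, ← integral_sum_lineDerivOp_lineDerivOp_sq]
  exact sq_integral_mul_le (f.memLp 2 μ) (SchwartzMap.memLp _ 2 μ)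

end Integration

section Energy

variable [MeasurableSpace E] (μ : Measure E) {ι : Type*} [Fintype ι] (v : ι → E)

def lineDerivEnergy (j : ℕ) (f : 𝓢(E, ℝ)) : ℝ :=
  ∑ p : Fin j → ι, ∫ x, ∂^{v ∘ p} f x ^ 2 ∂μ

theorem lineDerivEnergy_zero (f : 𝓢(E, ℝ)) : lineDerivEnergy μ v 0 f = ∫ x, f x ^ 2 ∂μ := by
  simp [lineDerivEnergy]

theorem lineDerivEnergy_succ (j : ℕ) (f : 𝓢(E, ℝ)) :
    lineDerivEnergy μ v (j + 1) f
      = ∑ q : Fin j → ι, ∑ i, ∫ x, ∂_{v i} (∂^{v ∘ q} f) x ^ 2 ∂μ := by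
  rw [lineDerivEnergy, Fin.sum_univ_fun_succ, Finset.sum_comm]
  rfl

theorem lineDerivEnergy_succ_succ (j : ℕ) (f : 𝓢(E, ℝ)) :
    lineDerivEnergy μ v (j + 2) f
      = ∑ q : Fin j → ι, ∑ i, ∑ k, ∫ x, ∂_{v i} (∂_{v k} (∂^{v ∘ q} f)) x ^ 2 ∂μ := by
  rw [lineDerivEnergy_succ, Fin.sum_univ_fun_succ, Finset.sum_comm]
  exact Finset.sum_congr rfl fun q _ => Finset.sum_comm

variable [FiniteDimensional ℝ E] [BorelSpace E] [μ.IsAddHaarMeasure]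

theorem lineDerivEnergy_succ_sq_le (j : ℕ) (f : 𝓢(E, ℝ)) :
    lineDerivEnergy μ v (j + 1) f ^ 2
      ≤ lineDerivEnergy μ v j f * lineDerivEnergy μ v (j + 2) f := by
  rw [lineDerivEnergy_succ, lineDerivEnergy_succ_succ, lineDerivEnergy]
  exact Finset.sum_sq_le_sum_mul_sum_of_sq_le_mul _
    (fun q _ => integral_nonneg fun x => sq_nonneg _)
    (fun q _ => Finset.sum_nonneg fun i _ => Finset.sum_nonneg fun k _ =>
      integral_nonneg fun x => sq_nonneg _)
    (fun q _ => sq_sum_integral_lineDerivOp_sq_le v _)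

theorem lineDerivEnergy_one_pos [Nontrivial E] (b : Module.Basis ι ℝ E) {f : 𝓢(E, ℝ)}
    (hf : f ≠ 0) : 0 < lineDerivEnergy μ b 1 f := by
  obtain ⟨i, hi⟩ : ∃ i, ∂_{b i} f ≠ 0 := by
    by_contra! h
    exact hf (eq_zero_of_lineDerivOp_eq_zero b h)
  exact Finset.sum_pos' (fun p _ => integral_nonneg fun x => sq_nonneg _)
    ⟨fun _ => i, Finset.mem_univ _, integral_sq_pos hi⟩

end Energy

end SchwartzMap

section Euclidean

variable {N : ℕ}

theorem pd_eq_lineDerivOp (i : Fin N) (f : 𝓢(EuclideanSpace ℝ (Fin N), ℝ)) :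
    pd i f = ⇑(∂_{(EuclideanSpace.basisFun (Fin N) ℝ).toBasis i} f : 𝓢(_, ℝ)) := by
  ext x
  simp [pd, SchwartzMap.lineDerivOp_apply_eq_fderiv]

theorem pdIter_ofFn {j : ℕ} (p : Fin j → Fin N) (f : 𝓢(EuclideanSpace ℝ (Fin N), ℝ)) :
    pdIter (List.ofFn p) f = ⇑(∂^{(EuclideanSpace.basisFun (Fin N) ℝ).toBasis ∘ p} f) := by
  induction j with
  | zero => rfl
  | succ j ih =>
    rw [List.ofFn_succ]
    change pd (p 0) (pdIter (List.ofFn fun i => p i.succ) f) = _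
    rw [ih, pd_eq_lineDerivOp]
    rfl

theorem dirEnergy_eq_lineDerivEnergy (j : ℕ) (f : 𝓢(EuclideanSpace ℝ (Fin N), ℝ)) :
    dirEnergy j f
      = SchwartzMap.lineDerivEnergy volume (EuclideanSpace.basisFun (Fin N) ℝ).toBasis j f := by
  simp only [dirEnergy, SchwartzMap.lineDerivEnergy, pdIter_ofFn]

end Euclidean

/-- **Polyharmonic logarithmic Sobolev inequality with explicit constant, conditional on
the classical logarithmic Sobolev inequality.** If `u` is a Schwartz function on `ℝ^N`
with `∫ u² = 1` satisfying `∫ u² log|u| ≤ (N/4) log((2/(πeN)) S₁(u))`, then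
`∫ u² log|u| ≤ (N/(4m)) log((2/(πeN))^m S_m(u))`. (Note `Real.log 0 = 0`, so the
integrand `u² log|u|` vanishes where `u = 0`.) -/
theorem polyharmonic_logSobolev_of_classical
    (N m : ℕ) (hN : 1 ≤ N) (hm : 1 ≤ m)
    (u : SchwartzMap (EuclideanSpace ℝ (Fin N)) ℝ)
    (hnorm : ∫ x : EuclideanSpace ℝ (Fin N), (u x) ^ 2 = 1)
    (hLS : ∫ x : EuclideanSpace ℝ (Fin N), (u x) ^ 2 * Real.log |u x|
      ≤ ((N : ℝ) / 4) *
          Real.log (2 / (π * Real.exp 1 * N) * dirEnergy 1 (fun y => u y))) :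
    ∫ x : EuclideanSpace ℝ (Fin N), (u x) ^ 2 * Real.log |u x|
      ≤ ((N : ℝ) / (4 * m)) *
          Real.log ((2 / (π * Real.exp 1 * N)) ^ m * dirEnergy m (fun y => u y)) := by
  set b := (EuclideanSpace.basisFun (Fin N) ℝ).toBasis
  set S : ℕ → ℝ := fun j => SchwartzMap.lineDerivEnergy volume b j u
  have : Nontrivial (EuclideanSpace ℝ (Fin N)) :=
    have : Nonempty (Fin N) := ⟨⟨0, hN⟩⟩
    inferInstance
  have hS0 : S 0 = 1 := (SchwartzMap.lineDerivEnergy_zero _ _ _).trans hnorm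
  have hS1 : 0 < S 1 := SchwartzMap.lineDerivEnergy_one_pos _ b fun hu => by simp [hu] at hnorm
  have hpow : S 1 ^ m ≤ S m := by
    simpa [hS0] using pow_mul_le_pow_mul_of_sq_le_mul (hS0 ▸ one_pos) hS1
      (SchwartzMap.lineDerivEnergy_succ_sq_le _ _ · u) m
  have hc : 0 < 2 / (π * Real.exp 1 * N) := by
    have : (0 : ℝ) < N := by exact_mod_cast hN
    positivity
  have hm0 : (m : ℝ) ≠ 0 := by exact_mod_cast (Nat.one_le_iff_ne_zero.mp hm)
  rw [dirEnergy_eq_lineDerivEnergy] at hLS ⊢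
  calc _ ≤ (N : ℝ) / 4 * Real.log (2 / (π * Real.exp 1 * N) * S 1) := hLS
    _ = (N : ℝ) / (4 * m) * Real.log ((2 / (π * Real.exp 1 * N) * S 1) ^ m) := by
      rw [Real.log_pow]; field_simp
    _ ≤ (N : ℝ) / (4 * m) * Real.log ((2 / (π * Real.exp 1 * N)) ^ m * S m) := by
      rw [mul_pow]; gcongr
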